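/- arXiv:1904.00287 — 4 statements merged into one kernel-verified Lean document; each statement's English description precedes it below -/
import Mathlib

section
/- Blackwell dominance implies one-step convex dominance of the Bayesian filter: if B(2) Blackwell dominates B(1), i.e. B_{iy}(1) = Σ_{ȳ ∈ 𝕐_2} B_{iȳ}(2) L_{ȳ y} for a stochastic matrix L (entries L_{ȳ y} ≥ 0 with Σ_{y ∈ 𝕐_1} L_{ȳ y} = 1), then for every probability vector π and every convex function φ : ℝ^X → ℝ, Σ_{y ∈ 𝕐_1} φ(T(π, y, 1)) σ(π, y, 1) ≤ Σ_{ȳ ∈ 𝕐_2} φ(T(π, ȳ, 2)) σ(π, ȳ, 2). -/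
/-!
`φ(T(π, y, u)) σ(π, y, u)` is the perspective `(∑ v) φ(v / ∑ v)` of `φ` at the unnormalised
posterior `v_j = B_{jy}(u) (P'π)_j`. On the nonnegative orthant the perspective of a convex
function is positively homogeneous and, by two-point Jensen, subadditive. Blackwell dominance
writes each unnormalised posterior of sensor 1 as `∑_ȳ L_{ȳy} v(ȳ)` over those of sensor 2, so
summing over `y` and using `∑_y L_{ȳy} = 1` gives the inequality.
-/

open Finset

/-- Predicted belief `(P'π)_j = Σ_i P_{ij} π_i`. -/
def pdct {X : ℕ} (P : Fin X → Fin X → ℝ) (π : Fin X → ℝ) (j : Fin X) : ℝ :=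
  ∑ i, P i j * π i

/-- One-step normalizer `σ(π, y, u) = Σ_j (P'π)_j B_{jy}(u)`. -/
def nrm1 {X Y : ℕ} (B : Fin X → Fin Y → ℝ) (pr : Fin X → ℝ) (y : Fin Y) : ℝ :=
  ∑ j, pr j * B j y

/-- One-step posterior (Bayes filter update) `T(π, y, u)`. -/
noncomputable def post {X Y : ℕ} (B : Fin X → Fin Y → ℝ) (pr : Fin X → ℝ)
    (y : Fin Y) : Fin X → ℝ :=
  fun j => B j y * pr j / nrm1 B pr y

section Perspective

variable {ι : Type*} [Fintype ι] (φ : (ι → ℝ) → ℝ)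

-- At `∑ v = 0` the junk value `0⁻¹ = 0` gives `0`, which keeps it positively homogeneous.
noncomputable def perspective (v : ι → ℝ) : ℝ :=
  (∑ i, v i) * φ ((∑ i, v i)⁻¹ • v)

variable {φ}

@[simp]
lemma perspective_zero : perspective φ 0 = 0 := by
  simp [perspective]

lemma perspective_smul {c : ℝ} (hc : 0 ≤ c) (v : ι → ℝ) :
    perspective φ (c • v) = c * perspective φ v := by
  rcases hc.eq_or_lt with rfl | hc
  · simp
  simp only [perspective, Pi.smul_apply, smul_eq_mul, ← Finset.mul_sum, smul_smul,
    mul_inv_rev, inv_mul_cancel_right₀ hc.ne']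
  ring

lemma inv_sum_smul_mem_stdSimplex {v : ι → ℝ} (hv : 0 ≤ v) (h : 0 < ∑ i, v i) :
    (∑ i, v i)⁻¹ • v ∈ stdSimplex ℝ ι :=
  ⟨fun i => mul_nonneg (inv_nonneg.2 h.le) (hv i), by
    simp only [Pi.smul_apply, smul_eq_mul, ← Finset.mul_sum, inv_mul_cancel₀ h.ne']⟩

lemma ConvexOn.perspective_add_le (hφ : ConvexOn ℝ (stdSimplex ℝ ι) φ) {v w : ι → ℝ}
    (hv : 0 ≤ v) (hw : 0 ≤ w) :
    perspective φ (v + w) ≤ perspective φ v + perspective φ w := by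
  set a := ∑ i, v i
  set b := ∑ i, w i
  rcases (show 0 ≤ a from Fintype.sum_nonneg hv).eq_or_lt with ha | ha
  · simp [(Fintype.sum_eq_zero_iff_of_nonneg hv).1 ha.symm]
  rcases (show 0 ≤ b from Fintype.sum_nonneg hw).eq_or_lt with hb | hb
  · simp [(Fintype.sum_eq_zero_iff_of_nonneg hw).1 hb.symm]
  have hab : 0 < a + b := add_pos ha hb
  have hsum : ∑ i, (v + w) i = a + b := Finset.sum_add_distrib
  have hmix :
      (a + b)⁻¹ • (v + w) = (a / (a + b)) • (a⁻¹ • v) + (b / (a + b)) • (b⁻¹ • w) := by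
    simp only [smul_smul, smul_add]
    congr 2 <;> field_simp
  have hjensen := hφ.2 (inv_sum_smul_mem_stdSimplex hv ha) (inv_sum_smul_mem_stdSimplex hw hb)
    (div_nonneg ha.le hab.le) (div_nonneg hb.le hab.le) (by field_simp)
  rw [← hmix, smul_eq_mul, smul_eq_mul] at hjensen
  simp only [perspective, hsum]
  calc (a + b) * φ ((a + b)⁻¹ • (v + w))
      ≤ (a + b) * (a / (a + b) * φ (a⁻¹ • v) + b / (a + b) * φ (b⁻¹ • w)) :=
        mul_le_mul_of_nonneg_left hjensen hab.le
    _ = a * φ (a⁻¹ • v) + b * φ (b⁻¹ • w) := by field_simp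

lemma ConvexOn.perspective_sum_le (hφ : ConvexOn ℝ (stdSimplex ℝ ι) φ) {κ : Type*}
    (s : Finset κ) {v : κ → ι → ℝ} (hv : ∀ k ∈ s, 0 ≤ v k) :
    perspective φ (∑ k ∈ s, v k) ≤ ∑ k ∈ s, perspective φ (v k) :=
  Finset.le_sum_of_subadditive_on_pred _ (0 ≤ ·) perspective_zero.le
    (fun _ _ => hφ.perspective_add_le) (fun _ _ => add_nonneg) v hv

lemma ConvexOn.sum_perspective_garbling_le (hφ : ConvexOn ℝ (stdSimplex ℝ ι) φ)
    {κ₁ κ₂ : Type*} [Fintype κ₁] [Fintype κ₂] (L : κ₂ → κ₁ → ℝ) (hL : ∀ k l, 0 ≤ L k l)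
    (hLrow : ∀ k, ∑ l, L k l = 1) {v : κ₂ → ι → ℝ} (hv : ∀ k, 0 ≤ v k) :
    ∑ l, perspective φ (∑ k, L k l • v k) ≤ ∑ k, perspective φ (v k) :=
  calc ∑ l, perspective φ (∑ k, L k l • v k)
      ≤ ∑ l, ∑ k, L k l * perspective φ (v k) := Finset.sum_le_sum fun l _ =>
        (hφ.perspective_sum_le _ fun k _ => smul_nonneg (hL k l) (hv k)).trans_eq
          (Finset.sum_congr rfl fun k _ => perspective_smul (hL k l) _)
    _ = ∑ k, perspective φ (v k) := by
        rw [Finset.sum_comm]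
        simp only [← Finset.sum_mul, hLrow, one_mul]

end Perspective

lemma post_mul_nrm1 {X Y : ℕ} (φ : (Fin X → ℝ) → ℝ) (B : Fin X → Fin Y → ℝ)
    (pr : Fin X → ℝ) (y : Fin Y) :
    φ (post B pr y) * nrm1 B pr y = perspective φ fun j => B j y * pr j := by
  have hnrm : nrm1 B pr y = ∑ j, B j y * pr j := by simp only [nrm1, mul_comm]
  rw [perspective, ← hnrm, mul_comm]
  congr 2
  funext j
  simp only [post, Pi.smul_apply, smul_eq_mul, div_eq_inv_mul]

theorem stmt_5_general (X Y₁ Y₂ : ℕ)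
    (P : Fin X → Fin X → ℝ) (hPnn : ∀ i j, 0 ≤ P i j)
    (B₁ : Fin X → Fin Y₁ → ℝ) (B₂ : Fin X → Fin Y₂ → ℝ)
    (hB₂nn : ∀ x y, 0 ≤ B₂ x y)
    -- Blackwell dominance: B(1) = B(2) × L for a stochastic matrix L
    (L : Fin Y₂ → Fin Y₁ → ℝ)
    (hLnn : ∀ ybar y, 0 ≤ L ybar y) (hLrow : ∀ ybar, ∑ y, L ybar y = 1)
    (hBW : ∀ (i : Fin X) (y : Fin Y₁), B₁ i y = ∑ ybar, B₂ i ybar * L ybar y)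
    -- belief
    (π : Fin X → ℝ) (hπnn : ∀ i, 0 ≤ π i)
    (φ : (Fin X → ℝ) → ℝ) (hφ : ConvexOn ℝ (stdSimplex ℝ (Fin X)) φ) :
    (∑ y : Fin Y₁, φ (post B₁ (pdct P π) y) * nrm1 B₁ (pdct P π) y) ≤
      ∑ ybar : Fin Y₂, φ (post B₂ (pdct P π) ybar) * nrm1 B₂ (pdct P π) ybar := by
  set pr := pdct P π
  have hpr : 0 ≤ pr := fun j => Finset.sum_nonneg fun i _ => mul_nonneg (hPnn i j) (hπnn i)
  have hgarble : ∀ y, (fun j => B₁ j y * pr j) =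
      ∑ ybar, L ybar y • fun j => B₂ j ybar * pr j := by
    intro y
    funext j
    simp only [hBW, Finset.sum_apply, Pi.smul_apply, smul_eq_mul, Finset.sum_mul]
    exact Finset.sum_congr rfl fun _ _ => by ring
  simp only [post_mul_nrm1, hgarble]
  exact hφ.sum_perspective_garbling_le L hLnn hLrow fun ybar j =>
    mul_nonneg (hB₂nn j ybar) (hpr j)

/-- **Blackwell dominance implies one-step convex dominance of the Bayesian
filter.**  If `B(1) = B(2) L` for a stochastic matrix `L`, then for every
belief `π` and every `φ` convex on the probability simplex,
`Σ_{y∈𝕐₁} φ(T(π,y,1)) σ(π,y,1) ≤ Σ_{ȳ∈𝕐₂} φ(T(π,ȳ,2)) σ(π,ȳ,2)`. -/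
theorem stmt_5 (X Y₁ Y₂ : ℕ)
    (P : Fin X → Fin X → ℝ) (hPnn : ∀ i j, 0 ≤ P i j) (hProw : ∀ i, ∑ j, P i j = 1)
    (B₁ : Fin X → Fin Y₁ → ℝ) (B₂ : Fin X → Fin Y₂ → ℝ)
    (hB₁nn : ∀ x y, 0 ≤ B₁ x y) (hB₂nn : ∀ x y, 0 ≤ B₂ x y)
    (hB₁row : ∀ x, ∑ y, B₁ x y = 1) (hB₂row : ∀ x, ∑ y, B₂ x y = 1)
    -- Blackwell dominance: B(1) = B(2) × L for a stochastic matrix L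
    (L : Fin Y₂ → Fin Y₁ → ℝ)
    (hLnn : ∀ ybar y, 0 ≤ L ybar y) (hLrow : ∀ ybar, ∑ y, L ybar y = 1)
    (hBW : ∀ (i : Fin X) (y : Fin Y₁), B₁ i y = ∑ ybar, B₂ i ybar * L ybar y)
    -- belief
    (π : Fin X → ℝ) (hπnn : ∀ i, 0 ≤ π i) (hπ : ∑ i, π i = 1)
    (hσ₁ : ∀ y : Fin Y₁, 0 < nrm1 B₁ (pdct P π) y)
    (hσ₂ : ∀ y : Fin Y₂, 0 < nrm1 B₂ (pdct P π) y)
    (φ : (Fin X → ℝ) → ℝ) (hφ : ConvexOn ℝ (stdSimplex ℝ (Fin X)) φ) :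
    (∑ y : Fin Y₁, φ (post B₁ (pdct P π) y) * nrm1 B₁ (pdct P π) y) ≤
      ∑ ybar : Fin Y₂, φ (post B₂ (pdct P π) ybar) * nrm1 B₂ (pdct P π) ybar :=
  stmt_5_general X Y₁ Y₂ P hPnn B₁ B₂ hB₂nn L hLnn hLrow hBW π hπnn φ hφ
end

section
/- For additive noise models, the single-crossing condition (A2) is equivalent to dispersive dominance of the noise distributions: let F_1 and F_2 be continuous, strictly increasing cdfs on ℝ. Then [for all ȳ, y ∈ ℝ, the map x ↦ F_1(ȳ − x) − F_2(y − x) is single crossing in x] holds if and only if F_1 ≥_D F_2 in the dispersive order, i.e. F_1^{-1}(β) − F_1^{-1}(α) ≥ F_2^{-1}(β) − F_2^{-1}(α) for all 0 < α < β < 1. -/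
/-!
Put `g t = Q₁ (F₂ t) - t`, the displacement of the map `Q₁ ∘ F₂` transporting `F₂` to `F₁`.
Dispersive dominance `F₁ ≥_D F₂` says exactly that `g` is nondecreasing. On the other hand
`F₁ (ȳ - x) ≥ F₂ (y - x)` holds iff `g (y - x) ≤ ȳ - y`; as `y - x` decreases in `x`, a monotone
`g` makes the set where the difference is `≥ 0` (resp. `≤ 0`) an up-set (resp. a down-set).
Conversely, choosing `ȳ = Q₁ (F₂ y)` makes the difference vanish at `x = 0`, and single crossing
to the right of `0` reads off `g (y - x) ≤ g y`.
-/

/-- `ψ` is single crossing (from below): once nonnegative it stays nonnegative. -/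
def SingleCrossing {α : Type*} [Preorder α] (ψ : α → ℝ) : Prop :=
  ∀ ⦃x x' : α⦄, x < x' → (0 ≤ ψ x → 0 ≤ ψ x') ∧ (ψ x' ≤ 0 → ψ x ≤ 0)

open Filter Set Topology

theorem StrictMono.mem_Ioo_of_tendsto {α β : Type*} [LinearOrder α] [NoMinOrder α]
    [NoMaxOrder α] [TopologicalSpace β] [Preorder β] [OrderClosedTopology β] {f : α → β}
    {a b : β} (hf : StrictMono f)
    (ha : Tendsto f atBot (𝓝 a)) (hb : Tendsto f atTop (𝓝 b)) (x : α) : f x ∈ Ioo a b := by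
  obtain ⟨x₀, hx₀⟩ := exists_lt x
  obtain ⟨x₁, hx₁⟩ := exists_gt x
  exact ⟨(hf.monotone.le_of_tendsto ha x₀).trans_lt (hf hx₀),
    (hf hx₁).trans_le (hf.monotone.ge_of_tendsto hb x₁)⟩

section QuantileDisplacement

variable {F₁ F₂ Q₁ Q₂ : ℝ → ℝ}

theorem monotone_quantile_sub_iff_dispersive (hF₂ : StrictMono F₂)
    (hF₂01 : ∀ t, F₂ t ∈ Ioo 0 1) (hQ₂ : ∀ α : ℝ, 0 < α → α < 1 → F₂ (Q₂ α) = α) :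
    Monotone (fun t => Q₁ (F₂ t) - t) ↔
      ∀ α β : ℝ, 0 < α → α < β → β < 1 → Q₂ β - Q₂ α ≤ Q₁ β - Q₁ α := by
  have hQ₂F₂ : ∀ t, Q₂ (F₂ t) = t := fun t =>
    hF₂.injective (hQ₂ _ (hF₂01 t).1 (hF₂01 t).2)
  constructor
  · intro hg α β hα hαβ hβ
    have hFα := hQ₂ α hα (hαβ.trans hβ)
    have hFβ := hQ₂ β (hα.trans hαβ) hβ
    have hle : Q₂ α ≤ Q₂ β := hF₂.le_iff_le.mp (by rw [hFα, hFβ]; exact hαβ.le)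
    have := hg hle
    simp only [hFα, hFβ] at this
    linarith
  · intro hdisp t t' htt'
    rcases htt'.eq_or_lt with rfl | hlt
    · exact le_rfl
    have := hdisp _ _ (hF₂01 t).1 (hF₂ hlt) (hF₂01 t').2
    simp only [hQ₂F₂] at this
    linarith

variable (hF₁ : StrictMono F₁) (hQ₁ : ∀ α : ℝ, 0 < α → α < 1 → F₁ (Q₁ α) = α)
  (hF₂01 : ∀ t, F₂ t ∈ Ioo 0 1)
include hF₁ hQ₁ hF₂01

theorem quantile_sub_le_iff_nonneg (a b : ℝ) :
    Q₁ (F₂ b) - b ≤ a - b ↔ 0 ≤ F₁ a - F₂ b := by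
  rw [sub_le_sub_iff_right, sub_nonneg, ← hF₁.le_iff_le, hQ₁ _ (hF₂01 b).1 (hF₂01 b).2]

theorem le_quantile_sub_iff_nonpos (a b : ℝ) :
    a - b ≤ Q₁ (F₂ b) - b ↔ F₁ a - F₂ b ≤ 0 := by
  rw [sub_le_sub_iff_right, sub_nonpos, ← hF₁.le_iff_le, hQ₁ _ (hF₂01 b).1 (hF₂01 b).2]

theorem singleCrossing_iff_monotone_quantile_sub :
    (∀ ybar y : ℝ, SingleCrossing (fun x : ℝ => F₁ (ybar - x) - F₂ (y - x))) ↔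
      Monotone (fun t => Q₁ (F₂ t) - t) := by
  have nonneg_iff := quantile_sub_le_iff_nonneg hF₁ hQ₁ hF₂01
  have nonpos_iff := le_quantile_sub_iff_nonpos hF₁ hQ₁ hF₂01
  constructor
  · intro hsc t y hty
    rcases hty.eq_or_lt with rfl | hlt
    · exact le_rfl
    have hzero : 0 ≤ F₁ (Q₁ (F₂ y) - 0) - F₂ (y - 0) := by
      simp [hQ₁ _ (hF₂01 y).1 (hF₂01 y).2]
    have := (nonneg_iff _ _).mpr ((hsc _ y (sub_pos.mpr hlt)).1 hzero)
    simp only [sub_sub_cancel] at this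
    linarith
  · intro hg ybar y x x' hxx'
    have hyx : y - x' ≤ y - x := by linarith
    refine ⟨fun h => ?_, fun h => ?_⟩
    · rw [← nonneg_iff] at h ⊢
      calc Q₁ (F₂ (y - x')) - (y - x') ≤ Q₁ (F₂ (y - x)) - (y - x) := hg hyx
        _ ≤ ybar - x - (y - x) := h
        _ = ybar - x' - (y - x') := by ring
    · rw [← nonpos_iff] at h ⊢
      calc ybar - x - (y - x) = ybar - x' - (y - x') := by ring
        _ ≤ Q₁ (F₂ (y - x')) - (y - x') := h
        _ ≤ Q₁ (F₂ (y - x)) - (y - x) := hg hyx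

end QuantileDisplacement

theorem stmt_7_general (F₁ F₂ Q₁ Q₂ : ℝ → ℝ)
    (hF₁m : StrictMono F₁) (hF₂m : StrictMono F₂)
    (hF₂bot : Filter.Tendsto F₂ Filter.atBot (nhds 0))
    (hF₂top : Filter.Tendsto F₂ Filter.atTop (nhds 1))
    (hQ₁ : ∀ α : ℝ, 0 < α → α < 1 → F₁ (Q₁ α) = α)
    (hQ₂ : ∀ α : ℝ, 0 < α → α < 1 → F₂ (Q₂ α) = α) :
    (∀ ybar y : ℝ, SingleCrossing (fun x : ℝ => F₁ (ybar - x) - F₂ (y - x))) ↔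
    (∀ α β : ℝ, 0 < α → α < β → β < 1 → Q₂ β - Q₂ α ≤ Q₁ β - Q₁ α) := by
  have hF₂01 := hF₂m.mem_Ioo_of_tendsto hF₂bot hF₂top
  exact (singleCrossing_iff_monotone_quantile_sub hF₁m hQ₁ hF₂01).trans
    (monotone_quantile_sub_iff_dispersive hF₂m hF₂01 hQ₂)

/-- **(A2) for the additive model ⇔ dispersive dominance.**
Let `F₁, F₂` be continuous strictly increasing cdfs on `ℝ` (limits `0` at `-∞`
and `1` at `+∞`), with quantile functions `Q₁, Q₂` (i.e. `Fᵤ (Qᵤ α) = α` for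
`α ∈ (0,1)`).  Then the map `x ↦ F₁(ȳ - x) - F₂(y - x)` is single crossing for
all `ȳ, y` if and only if `F₁ ≥_D F₂` in the dispersive order:
`Q₁ β - Q₁ α ≥ Q₂ β - Q₂ α` for all `0 < α < β < 1`. -/
theorem stmt_7 (F₁ F₂ Q₁ Q₂ : ℝ → ℝ)
    (hF₁c : Continuous F₁) (hF₂c : Continuous F₂)
    (hF₁m : StrictMono F₁) (hF₂m : StrictMono F₂)
    (hF₁bot : Filter.Tendsto F₁ Filter.atBot (nhds 0))
    (hF₁top : Filter.Tendsto F₁ Filter.atTop (nhds 1))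
    (hF₂bot : Filter.Tendsto F₂ Filter.atBot (nhds 0))
    (hF₂top : Filter.Tendsto F₂ Filter.atTop (nhds 1))
    (hQ₁ : ∀ α : ℝ, 0 < α → α < 1 → F₁ (Q₁ α) = α)
    (hQ₂ : ∀ α : ℝ, 0 < α → α < 1 → F₂ (Q₂ α) = α) :
    (∀ ybar y : ℝ, SingleCrossing (fun x : ℝ => F₁ (ybar - x) - F₂ (y - x))) ↔
    (∀ α β : ℝ, 0 < α → α < β → β < 1 → Q₂ β - Q₂ α ≤ Q₁ β - Q₁ α) :=
  stmt_7_general F₁ F₂ Q₁ Q₂ hF₁m hF₂m hF₂bot hF₂top hQ₁ hQ₂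
end

section
/- Condition (A5) implies monotone likelihood ratio ordering of posteriors across observation sequences: if for given u and lexicographic z < z̄ the matrix H_u(i,j,z,z̄) = L_u(z̄)(e_j e_i' − e_i e_j')L_u(z)' + L_u(z)(e_i e_j' − e_j e_i')L_u(z̄)' has all entries nonnegative for every i < j, then for every probability vector π and all i ≤ j: (e_i'L_u(z)'π)(e_j'L_u(z̄)'π) ≥ (e_j'L_u(z)'π)(e_i'L_u(z̄)'π); i.e., the posterior T(π, z, u) is dominated by T(π, z̄, u) in the monotone likelihood ratio order, and hence g'T(π, z, u) ≤ g'T(π, z̄, u) for any nondecreasing level vector g. -/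
open Finset Matrix

/-- Matrix of the unnormalized filter for the observation sequence `z`:
`L_u(z) = Π_{t=1}^k P B_{y_t}(u)`, product taken in order `t = 1,…,k`. -/
noncomputable def Lmat {X Y : ℕ} (P : Matrix (Fin X) (Fin X) ℝ)
    (B : Fin X → Fin Y → ℝ) {k : ℕ} (z : Fin k → Fin Y) :
    Matrix (Fin X) (Fin X) ℝ :=
  (List.ofFn (fun t => P * Matrix.diagonal (fun i => B i (z t)))).prod

/-- Normalizer `σ(π, z) = 1' L(z)' π`. -/
noncomputable def sigL {X Y : ℕ} (P : Matrix (Fin X) (Fin X) ℝ)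
    (B : Fin X → Fin Y → ℝ) {k : ℕ} (z : Fin k → Fin Y) (π : Fin X → ℝ) : ℝ :=
  ∑ i, ((Lmat P B z)ᵀ *ᵥ π) i

/-- Posterior mean `g'T(π, z) = g' L(z)' π / (1' L(z)' π)`. -/
noncomputable def gT {X Y : ℕ} (P : Matrix (Fin X) (Fin X) ℝ)
    (B : Fin X → Fin Y → ℝ) (g : Fin X → ℝ) {k : ℕ} (z : Fin k → Fin Y)
    (π : Fin X → ℝ) : ℝ :=
  (∑ i, g i * ((Lmat P B z)ᵀ *ᵥ π) i) / sigL P B z π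

/-- `H`-matrix from two unnormalized filter matrices:
`Hgen L M i j = M (e_j e_i' - e_i e_j') Lᵀ + L (e_i e_j' - e_j e_i') Mᵀ`. -/
noncomputable def Hgen {X : ℕ} (L M : Matrix (Fin X) (Fin X) ℝ) (i j : Fin X) :
    Matrix (Fin X) (Fin X) ℝ :=
  M * (Matrix.single j i 1 - Matrix.single i j 1) * Lᵀ +
    L * (Matrix.single i j 1 - Matrix.single j i 1) * Mᵀ

/-! Pairing `H(i,j)` with `π` on both sides gives twice the determinant
`(L'π)_i (L̄'π)_j - (L'π)_j (L̄'π)_i`, so entrywise nonnegativity of `H` and `π` yields the MLR order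
of the unnormalized posteriors. For monotone `g`, each term of
`∑_{i,j} (g_i - g_j) ((L̄'π)_i (L'π)_j - (L'π)_i (L̄'π)_j)` is then nonnegative, and the sum is
twice the cross-multiplied difference of the two posterior means. -/

namespace Matrix

variable {n R : Type*} [Fintype n] [DecidableEq n] [CommSemiring R]

theorem dotProduct_mul_single_mul_transpose_mulVec (A B : Matrix n n R) (p q : n) (v w : n → R) :
    v ⬝ᵥ ((A * single p q 1 * Bᵀ) *ᵥ w) = (Aᵀ *ᵥ v) p * (Bᵀ *ᵥ w) q := by
  rw [← mulVec_mulVec, ← mulVec_mulVec, dotProduct_mulVec, single_mulVec_eq, ← mulVec_transpose]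
  simp [dotProduct_smul, mul_comm]

end Matrix

theorem dotProduct_Hgen_mulVec {X : ℕ} (L M : Matrix (Fin X) (Fin X) ℝ) (i j : Fin X)
    (π : Fin X → ℝ) :
    π ⬝ᵥ (Hgen L M i j *ᵥ π) =
      2 * ((Lᵀ *ᵥ π) i * (Mᵀ *ᵥ π) j - (Lᵀ *ᵥ π) j * (Mᵀ *ᵥ π) i) := by
  simp only [Hgen, Matrix.mul_sub, Matrix.sub_mul, Matrix.add_mulVec, Matrix.sub_mulVec,
    dotProduct_add, dotProduct_sub, Matrix.dotProduct_mul_single_mul_transpose_mulVec]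
  ring

/-- `MLRLe a c` is the monotone likelihood ratio order `a ≤_r c`, stated without normalizing
`a` and `c`. -/
def MLRLe {ι R : Type*} [LE ι] [Mul R] [LE R] (a c : ι → R) : Prop :=
  ∀ i j, i ≤ j → a j * c i ≤ a i * c j

theorem mlrLe_of_Hgen_nonneg {X : ℕ} {L M : Matrix (Fin X) (Fin X) ℝ}
    (hH : ∀ i j, i < j → ∀ a b, 0 ≤ Hgen L M i j a b) {π : Fin X → ℝ} (hπ : 0 ≤ π) :
    MLRLe (Lᵀ *ᵥ π) (Mᵀ *ᵥ π) := by
  intro i j hij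
  rcases hij.eq_or_lt with rfl | hlt
  · rw [mul_comm]
  have hquad : 0 ≤ π ⬝ᵥ (Hgen L M i j *ᵥ π) :=
    dotProduct_nonneg_of_nonneg hπ fun a => dotProduct_nonneg_of_nonneg (hH i j hlt a) hπ
  rw [dotProduct_Hgen_mulVec] at hquad
  linarith

theorem sum_mul_sum_le_of_mlrLe {ι R : Type*} [Fintype ι] [LinearOrder ι] [CommRing R]
    [LinearOrder R] [IsStrictOrderedRing R] {a c g : ι → R} (h : MLRLe a c) (hg : Monotone g) :
    (∑ i, g i * a i) * ∑ i, c i ≤ (∑ i, g i * c i) * ∑ i, a i := by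
  have hpair : ∀ i j, 0 ≤ (g i - g j) * (c i * a j - a i * c j) := by
    intro i j
    rcases le_total i j with hij | hji
    · nlinarith [hg hij, h i j hij]
    · nlinarith [hg hji, h j i hji]
  have hsum : ∑ i, ∑ j, (g i - g j) * (c i * a j - a i * c j) =
      2 * ((∑ i, g i * c i) * ∑ i, a i - (∑ i, g i * a i) * ∑ i, c i) := by
    calc ∑ i, ∑ j, (g i - g j) * (c i * a j - a i * c j)
        = ∑ i, ∑ j, ((g i * c i) * a j - (g i * a i) * c j
            + (a i * (g j * c j) - c i * (g j * a j))) :=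
          Finset.sum_congr rfl fun i _ => Finset.sum_congr rfl fun j _ => by ring
      _ = 2 * ((∑ i, g i * c i) * ∑ i, a i - (∑ i, g i * a i) * ∑ i, c i) := by
          simp only [Finset.sum_add_distrib, Finset.sum_sub_distrib, ← Finset.sum_mul_sum]
          ring
  have hnonneg : 0 ≤ ∑ i, ∑ j, (g i - g j) * (c i * a j - a i * c j) :=
    Finset.sum_nonneg fun i _ => Finset.sum_nonneg fun j _ => hpair i j
  linarith

theorem stmt_16_general (X Y : ℕ) (P : Matrix (Fin X) (Fin X) ℝ)
    (B : Fin X → Fin Y → ℝ)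
    (k : ℕ) (z zbar : Fin k → Fin Y)
    (hH : ∀ i j : Fin X, i < j →
      ∀ a b, 0 ≤ Hgen (Lmat P B z) (Lmat P B zbar) i j a b)
    (π : Fin X → ℝ) (hπnn : ∀ i, 0 ≤ π i) :
    (∀ i j : Fin X, i ≤ j →
      ((Lmat P B z)ᵀ *ᵥ π) j * ((Lmat P B zbar)ᵀ *ᵥ π) i ≤
        ((Lmat P B z)ᵀ *ᵥ π) i * ((Lmat P B zbar)ᵀ *ᵥ π) j) ∧
    (0 < sigL P B z π → 0 < sigL P B zbar π →
      ∀ g : Fin X → ℝ, Monotone g → gT P B g z π ≤ gT P B g zbar π) := by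
  have hmlr : MLRLe ((Lmat P B z)ᵀ *ᵥ π) ((Lmat P B zbar)ᵀ *ᵥ π) :=
    mlrLe_of_Hgen_nonneg hH hπnn
  refine ⟨hmlr, fun hz hzbar g hg => ?_⟩
  rw [gT, gT, div_le_div_iff₀ hz hzbar]
  exact sum_mul_sum_le_of_mlrLe hmlr hg

/-- **(A5) implies MLR ordering of posteriors across observation sequences.**
If `H_u(i,j,z,z̄)` is entrywise nonnegative for all `i < j`, then for every
probability vector `π` and all `i ≤ j`,
`(e_i'L(z)'π)(e_j'L(z̄)'π) ≥ (e_j'L(z)'π)(e_i'L(z̄)'π)`, i.e. the posterior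
`T(π,z,u)` is MLR-dominated by `T(π,z̄,u)`; hence `g'T(π,z,u) ≤ g'T(π,z̄,u)`
for any nondecreasing level vector `g` (when the normalizers are positive). -/
theorem stmt_16 (X Y : ℕ) (P : Matrix (Fin X) (Fin X) ℝ)
    (hPnn : ∀ i j, 0 ≤ P i j) (hProw : ∀ i, ∑ j, P i j = 1)
    (B : Fin X → Fin Y → ℝ)
    (hBnn : ∀ x y, 0 ≤ B x y) (hBrow : ∀ x, ∑ y, B x y = 1)
    (k : ℕ) (z zbar : Fin k → Fin Y)
    (hH : ∀ i j : Fin X, i < j →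
      ∀ a b, 0 ≤ Hgen (Lmat P B z) (Lmat P B zbar) i j a b)
    (π : Fin X → ℝ) (hπnn : ∀ i, 0 ≤ π i) (hπ : ∑ i, π i = 1) :
    (∀ i j : Fin X, i ≤ j →
      ((Lmat P B z)ᵀ *ᵥ π) j * ((Lmat P B zbar)ᵀ *ᵥ π) i ≤
        ((Lmat P B z)ᵀ *ᵥ π) i * ((Lmat P B zbar)ᵀ *ᵥ π) j) ∧
    (0 < sigL P B z π → 0 < sigL P B zbar π →
      ∀ g : Fin X → ℝ, Monotone g → gT P B g z π ≤ gT P B g zbar π) :=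
  stmt_16_general X Y P B k z zbar hH π hπnn
end

section
/- Blackwell dominance gives the myopic lower bound for controlled sensing POMDPs: consider a controlled sensing POMDP (any number of states X) and suppose B(u+1) Blackwell dominates B(u) for every u = 1,…,U−1, i.e. B_{iy}(u) = Σ_{ȳ ∈ 𝕐_{u+1}} B_{iȳ}(u+1) L^{(u)}_{ȳ y} for stochastic matrices L^{(u)}. Then for every value-iteration step k ≥ 1, every belief π and every u < U: Q_k(π, u+1) − Q_k(π, u) ≥ (r_{u+1} − r_u)'π; hence the largest maximizer of Q_k(π, ·) is at least the largest maximizer of u ↦ r_u'π, i.e. the myopic policy μ̲(π) = argmax_u r_u'π lower bounds the optimal value-iteration policy. -/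
/-!
On the belief simplex the value function `V_k` is the restriction of a positively homogeneous
function `W_k` (`homVit`) on unnormalized beliefs, `W_k(q) = |q| V_k(q / |q|)`, because
`V_k(T(π,y,u)) σ(π,y,u)` is `W_k` evaluated at the unnormalized filter `B_{·y}(u) ⊙ P'π`
(`unnormTF`). Each step of value iteration preserves subadditivity, so `W_k` is sublinear. If
`B(u) = B(u+1) L` with `L` stochastic, the unnormalized filters of `u` are nonnegative
combinations of those of `u+1` whose weights sum to one over `y` for each `ybar`, and sublinearity
gives `Σ_y V_k(T(π,y,u)) σ(π,y,u) ≤ Σ_ybar V_k(T(π,ybar,u+1)) σ(π,ybar,u+1)`. Hence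
`Q_k(π,u) - r_u'π` is nondecreasing in `u`, which pushes the largest maximizer of `Q_k(π,·)`
above that of `r_·'π`.
-/

open Finset

/-- Filter normalizer `σ(π, y, u) = Σ_j (Σ_i P_{ij} π_i) B_{jy}(u)`. -/
def sigF {X Y : ℕ} (P : Fin X → Fin X → ℝ) (B : Fin X → Fin Y → ℝ)
    (π : Fin X → ℝ) (y : Fin Y) : ℝ :=
  ∑ j, (∑ i, P i j * π i) * B j y

/-- HMM filter update `T(π, y, u)`. -/
noncomputable def TF {X Y : ℕ} (P : Fin X → Fin X → ℝ) (B : Fin X → Fin Y → ℝ)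
    (π : Fin X → ℝ) (y : Fin Y) : Fin X → ℝ :=
  fun j => B j y * (∑ i, P i j * π i) / sigF P B π y

/-- Value iteration for the controlled sensing POMDP:
`V_0 = 0`, `V_{k+1}(π) = max_u [ r_u'π + ρ Σ_y V_k(T(π,y,u)) σ(π,y,u) ]`. -/
noncomputable def Vit {X U : ℕ} [NeZero U] (P : Fin X → Fin X → ℝ) (Y : Fin U → ℕ)
    (B : (u : Fin U) → Fin X → Fin (Y u) → ℝ) (r : Fin U → Fin X → ℝ) (ρ : ℝ) :
    ℕ → (Fin X → ℝ) → ℝ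
  | 0, _ => 0
  | (k+1), π =>
      Finset.univ.sup' Finset.univ_nonempty
        (fun u : Fin U => (∑ i, r u i * π i) +
          ρ * ∑ y, Vit P Y B r ρ k (TF P (B u) π y) * sigF P (B u) π y)

/-- `Q_k(π, u) = r_u'π + ρ Σ_y V_{k-1}(T(π,y,u)) σ(π,y,u)` (for `k ≥ 1`). -/
noncomputable def Qit {X U : ℕ} [NeZero U] (P : Fin X → Fin X → ℝ) (Y : Fin U → ℕ)
    (B : (u : Fin U) → Fin X → Fin (Y u) → ℝ) (r : Fin U → Fin X → ℝ) (ρ : ℝ)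
    (k : ℕ) (u : Fin U) (π : Fin X → ℝ) : ℝ :=
  (∑ i, r u i * π i) +
    ρ * ∑ y, Vit P Y B r ρ (k - 1) (TF P (B u) π y) * sigF P (B u) π y

section Filter

variable {X Y : ℕ} (P : Fin X → Fin X → ℝ) (B : Fin X → Fin Y → ℝ)

def unnormTF (q : Fin X → ℝ) (y : Fin Y) : Fin X → ℝ :=
  fun j => B j y * ∑ i, P i j * q i

lemma unnormTF_smul (c : ℝ) (q : Fin X → ℝ) (y : Fin Y) :
    unnormTF P B (c • q) y = c • unnormTF P B q y := by
  ext j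
  simp only [unnormTF, Pi.smul_apply, smul_eq_mul, mul_left_comm _ c, ← mul_sum]

lemma unnormTF_add (q₁ q₂ : Fin X → ℝ) (y : Fin Y) :
    unnormTF P B (q₁ + q₂) y = unnormTF P B q₁ y + unnormTF P B q₂ y := by
  ext j
  simp only [unnormTF, Pi.add_apply, mul_add, sum_add_distrib]

lemma unnormTF_eq_sum_smul_of_garbling {Y' : ℕ} {B' : Fin X → Fin Y' → ℝ}
    {L : Fin Y → Fin Y' → ℝ} (hBL : ∀ i y, B' i y = ∑ ybar, B i ybar * L ybar y)
    (q : Fin X → ℝ) (y : Fin Y') :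
    unnormTF P B' q y = ∑ ybar, L ybar y • unnormTF P B q ybar := by
  ext j
  rw [Finset.sum_apply]
  simp only [unnormTF, hBL, Pi.smul_apply, smul_eq_mul, sum_mul]
  exact sum_congr rfl fun _ _ => by ring

lemma sigF_smul_TF {π : Fin X → ℝ} {y : Fin Y} (hσ : sigF P B π y ≠ 0) :
    sigF P B π y • TF P B π y = unnormTF P B π y := by
  ext j
  simp only [Pi.smul_apply, smul_eq_mul, TF, unnormTF]
  field_simp

lemma TF_mem_stdSimplex (hP : ∀ i j, 0 ≤ P i j) (hB : ∀ x y, 0 ≤ B x y)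
    {π : Fin X → ℝ} (hπ : π ∈ stdSimplex ℝ (Fin X)) {y : Fin Y} (hσ : 0 < sigF P B π y) :
    TF P B π y ∈ stdSimplex ℝ (Fin X) := by
  refine ⟨fun j => div_nonneg ?_ hσ.le, ?_⟩
  · exact mul_nonneg (hB j y) (sum_nonneg fun i _ => mul_nonneg (hP i j) (hπ.1 i))
  · have hsum : ∑ j, B j y * ∑ i, P i j * π i = sigF P B π y :=
      sum_congr rfl fun _ _ => mul_comm _ _
    simp only [TF, ← sum_div, hsum, div_self hσ.ne']

end Filter

section HomogeneousValue

variable {X U : ℕ} [NeZero U] (P : Fin X → Fin X → ℝ) (Y : Fin U → ℕ)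
    (B : (u : Fin U) → Fin X → Fin (Y u) → ℝ) (r : Fin U → Fin X → ℝ) (ρ : ℝ)

noncomputable def homVit : ℕ → (Fin X → ℝ) → ℝ
  | 0, _ => 0
  | k + 1, q => univ.sup' univ_nonempty fun u : Fin U =>
      (∑ i, r u i * q i) + ρ * ∑ y, homVit k (unnormTF P (B u) q y)

lemma homVit_smul {c : ℝ} (hc : 0 ≤ c) (k : ℕ) (q : Fin X → ℝ) :
    homVit P Y B r ρ k (c • q) = c * homVit P Y B r ρ k q := by
  induction k generalizing q with
  | zero => simp [homVit]
  | succ k ih =>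
    rw [homVit, homVit, apply_sup'_eq_sup'_comp _ (c * ·) fun a b => mul_max_of_nonneg a b hc]
    refine sup'_congr _ rfl fun u _ => ?_
    have hreward : ∑ i, r u i * (c • q) i = c * ∑ i, r u i * q i := by
      simp only [Pi.smul_apply, smul_eq_mul, mul_sum, mul_left_comm]
    simp only [hreward, unnormTF_smul, ih, ← mul_sum, Function.comp_apply]
    ring

lemma homVit_add_le (hρ : 0 ≤ ρ) (k : ℕ) (q₁ q₂ : Fin X → ℝ) :
    homVit P Y B r ρ k (q₁ + q₂) ≤ homVit P Y B r ρ k q₁ + homVit P Y B r ρ k q₂ := by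
  induction k generalizing q₁ q₂ with
  | zero => simp [homVit]
  | succ k ih =>
    refine sup'_le _ _ fun u hu => ?_
    have hfuture : ∑ y, homVit P Y B r ρ k (unnormTF P (B u) (q₁ + q₂) y) ≤
        ∑ y, homVit P Y B r ρ k (unnormTF P (B u) q₁ y) +
          ∑ y, homVit P Y B r ρ k (unnormTF P (B u) q₂ y) := by
      rw [← sum_add_distrib]
      exact sum_le_sum fun y _ => unnormTF_add P (B u) q₁ q₂ y ▸ ih _ _
    have hreward : ∑ i, r u i * (q₁ + q₂) i = ∑ i, r u i * q₁ i + ∑ i, r u i * q₂ i := by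
      simp only [Pi.add_apply, mul_add, sum_add_distrib]
    rw [homVit, homVit]
    have h₁ := le_sup' (fun u : Fin U => (∑ i, r u i * q₁ i) +
      ρ * ∑ y, homVit P Y B r ρ k (unnormTF P (B u) q₁ y)) hu
    have h₂ := le_sup' (fun u : Fin U => (∑ i, r u i * q₂ i) +
      ρ * ∑ y, homVit P Y B r ρ k (unnormTF P (B u) q₂ y)) hu
    linarith [mul_le_mul_of_nonneg_left hfuture hρ]

lemma homVit_sum_smul_le (hρ : 0 ≤ ρ) (k : ℕ) {ι : Type*} (s : Finset ι) {a : ι → ℝ}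
    (ha : ∀ i, 0 ≤ a i) (q : ι → Fin X → ℝ) :
    homVit P Y B r ρ k (∑ i ∈ s, a i • q i) ≤ ∑ i ∈ s, a i * homVit P Y B r ρ k (q i) := by
  refine (le_sum_of_subadditive _ ?_ (homVit_add_le P Y B r ρ hρ k) s _).trans_eq ?_
  · simpa using (homVit_smul P Y B r ρ le_rfl k 0).le
  · exact sum_congr rfl fun i _ => homVit_smul P Y B r ρ (ha i) k (q i)

lemma sum_homVit_unnormTF_le_of_garbling (hρ : 0 ≤ ρ) (k : ℕ) {Y₁ Y₂ : ℕ}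
    {B₁ : Fin X → Fin Y₁ → ℝ} {B₂ : Fin X → Fin Y₂ → ℝ} {L : Fin Y₂ → Fin Y₁ → ℝ}
    (hLnn : ∀ ybar y, 0 ≤ L ybar y) (hLrow : ∀ ybar, ∑ y, L ybar y = 1)
    (hBL : ∀ i y, B₁ i y = ∑ ybar, B₂ i ybar * L ybar y) (q : Fin X → ℝ) :
    ∑ y, homVit P Y B r ρ k (unnormTF P B₁ q y) ≤
      ∑ ybar, homVit P Y B r ρ k (unnormTF P B₂ q ybar) :=
  calc ∑ y, homVit P Y B r ρ k (unnormTF P B₁ q y)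
      ≤ ∑ y, ∑ ybar, L ybar y * homVit P Y B r ρ k (unnormTF P B₂ q ybar) := by
        refine sum_le_sum fun y _ => ?_
        rw [unnormTF_eq_sum_smul_of_garbling P B₂ hBL]
        exact homVit_sum_smul_le P Y B r ρ hρ k _ (fun ybar => hLnn ybar y) _
    _ = ∑ ybar, homVit P Y B r ρ k (unnormTF P B₂ q ybar) := by
        rw [sum_comm]
        simp only [← sum_mul, hLrow, one_mul]

lemma homVit_unnormTF_eq {Y' : ℕ} (B' : Fin X → Fin Y' → ℝ) (k : ℕ) {π : Fin X → ℝ}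
    {y : Fin Y'} (hσ : 0 < sigF P B' π y) :
    homVit P Y B r ρ k (unnormTF P B' π y) =
      sigF P B' π y * homVit P Y B r ρ k (TF P B' π y) := by
  rw [← sigF_smul_TF P B' hσ.ne', homVit_smul P Y B r ρ hσ.le]

variable {P Y B} in
lemma Vit_eq_homVit (hP : ∀ i j, 0 ≤ P i j) (hB : ∀ u x y, 0 ≤ B u x y)
    (hσ : ∀ u π, π ∈ stdSimplex ℝ (Fin X) → ∀ y : Fin (Y u), 0 < sigF P (B u) π y)
    (k : ℕ) {π : Fin X → ℝ} (hπ : π ∈ stdSimplex ℝ (Fin X)) :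
    Vit P Y B r ρ k π = homVit P Y B r ρ k π := by
  induction k generalizing π with
  | zero => rfl
  | succ k ih =>
    refine sup'_congr _ rfl fun u _ => ?_
    congr 2
    refine sum_congr rfl fun y _ => ?_
    rw [homVit_unnormTF_eq P Y B r ρ _ k (hσ u π hπ y),
      ih (TF_mem_stdSimplex P (B u) hP (hB u) hπ (hσ u π hπ y)), mul_comm]

variable {P Y B} in
lemma Qit_sub_Qit_ge_of_garbling (hP : ∀ i j, 0 ≤ P i j) (hB : ∀ u x y, 0 ≤ B u x y)
    (hρ : 0 ≤ ρ)
    (hσ : ∀ u π, π ∈ stdSimplex ℝ (Fin X) → ∀ y : Fin (Y u), 0 < sigF P (B u) π y)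
    {u v : Fin U} {L : Fin (Y v) → Fin (Y u) → ℝ}
    (hLnn : ∀ ybar y, 0 ≤ L ybar y) (hLrow : ∀ ybar, ∑ y, L ybar y = 1)
    (hBL : ∀ i y, B u i y = ∑ ybar, B v i ybar * L ybar y)
    (k : ℕ) {π : Fin X → ℝ} (hπ : π ∈ stdSimplex ℝ (Fin X)) :
    ∑ i, (r v i - r u i) * π i ≤ Qit P Y B r ρ (k + 1) v π - Qit P Y B r ρ (k + 1) u π := by
  have hterm : ∀ w (y : Fin (Y w)), Vit P Y B r ρ k (TF P (B w) π y) * sigF P (B w) π y =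
      homVit P Y B r ρ k (unnormTF P (B w) π y) := fun w y => by
    rw [homVit_unnormTF_eq P Y B r ρ _ k (hσ w π hπ y), mul_comm,
      Vit_eq_homVit r ρ hP hB hσ k (TF_mem_stdSimplex P (B w) hP (hB w) hπ (hσ w π hπ y))]
  have hfuture := sum_homVit_unnormTF_le_of_garbling P Y B r ρ hρ k hLnn hLrow hBL π
  simp only [Qit, Nat.add_sub_cancel, hterm, sub_mul, sum_sub_distrib]
  linarith [mul_le_mul_of_nonneg_left hfuture hρ]

end HomogeneousValue

lemma Fin.monotone_of_le_next {U : ℕ} {α : Type*} [Preorder α] {g : Fin U → α}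
    (hstep : ∀ (u : Fin U) (h : (u : ℕ) + 1 < U), g u ≤ g ⟨(u : ℕ) + 1, h⟩) : Monotone g := by
  cases U with
  | zero => exact fun a => a.elim0
  | succ n => exact Fin.monotone_iff_le_succ.2 fun i => hstep i.castSucc (by simp)

lemma le_of_isGreatest_argmax {α β : Type*} [LinearOrder α] [AddCommGroup β] [LinearOrder β]
    [IsOrderedAddMonoid β] {f g : α → β} (hmono : Monotone (g - f)) {a b : α}
    (ha : IsGreatest {u | ∀ v, f v ≤ f u} a) (hb : IsGreatest {u | ∀ v, g v ≤ g u} b) :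
    a ≤ b := by
  by_contra! hba
  have hgap : g b - f b ≤ g a - f a := by simpa using hmono hba.le
  have hf : f b ≤ f a := ha.1 b
  have hg : g b ≤ g a := by simpa using add_le_add hgap hf
  exact hba.not_ge (hb.2 fun v => (hb.1 v).trans hg)

theorem stmt_18_general (X U : ℕ) [NeZero U]
    (P : Fin X → Fin X → ℝ) (hPnn : ∀ i j, 0 ≤ P i j)
    (Y : Fin U → ℕ)
    (B : (u : Fin U) → Fin X → Fin (Y u) → ℝ)
    (hBnn : ∀ u x y, 0 ≤ B u x y)
    (r : Fin U → Fin X → ℝ) (ρ : ℝ) (hρ0 : 0 ≤ ρ)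
    -- Blackwell dominance: B(u) = B(u+1) × L⁽ᵘ⁾ for stochastic matrices L⁽ᵘ⁾
    (L : (u : Fin U) → (h : (u : ℕ) + 1 < U) →
      Fin (Y ⟨(u : ℕ) + 1, h⟩) → Fin (Y u) → ℝ)
    (hLnn : ∀ u h ybar y, 0 ≤ L u h ybar y)
    (hLrow : ∀ u h ybar, ∑ y, L u h ybar y = 1)
    (hBW : ∀ (u : Fin U) (h : (u : ℕ) + 1 < U) (i : Fin X) (y : Fin (Y u)),
      B u i y = ∑ ybar, B ⟨(u : ℕ) + 1, h⟩ i ybar * L u h ybar y)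
    -- normalizers positive on the belief simplex
    (hσ : ∀ (u : Fin U) (π : Fin X → ℝ), π ∈ stdSimplex ℝ (Fin X) →
      ∀ y : Fin (Y u), 0 < sigF P (B u) π y) :
    ∀ (k : ℕ), 1 ≤ k → ∀ π : Fin X → ℝ, π ∈ stdSimplex ℝ (Fin X) →
      (∀ (u : Fin U) (h : (u : ℕ) + 1 < U),
        (∑ i, (r ⟨(u : ℕ) + 1, h⟩ i - r u i) * π i) ≤
          Qit P Y B r ρ k ⟨(u : ℕ) + 1, h⟩ π - Qit P Y B r ρ k u π) ∧
      (∀ muLow muOpt : Fin U,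
        IsGreatest {u : Fin U | ∀ v, ∑ i, r v i * π i ≤ ∑ i, r u i * π i} muLow →
        IsGreatest {u : Fin U | ∀ v, Qit P Y B r ρ k v π ≤ Qit P Y B r ρ k u π} muOpt →
        muLow ≤ muOpt) := by
  intro k hk π hπ
  obtain ⟨k, rfl⟩ : ∃ m, k = m + 1 := ⟨k - 1, by omega⟩
  have hstep : ∀ (u : Fin U) (h : (u : ℕ) + 1 < U),
      (∑ i, (r ⟨(u : ℕ) + 1, h⟩ i - r u i) * π i) ≤
        Qit P Y B r ρ (k + 1) ⟨(u : ℕ) + 1, h⟩ π - Qit P Y B r ρ (k + 1) u π :=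
    fun u h => Qit_sub_Qit_ge_of_garbling r ρ hPnn hBnn hρ0 hσ (hLnn u h) (hLrow u h)
      (hBW u h) k hπ
  refine ⟨hstep, fun muLow muOpt hLow hOpt => le_of_isGreatest_argmax ?_ hLow hOpt⟩
  refine Fin.monotone_of_le_next fun u h => ?_
  have hgap := hstep u h
  simp only [sub_mul, sum_sub_distrib] at hgap
  simp only [Pi.sub_apply]
  linarith

/-- **Blackwell dominance gives the myopic lower bound for controlled sensing
POMDPs.**  If `B(u) = B(u+1) L^{(u)}` for stochastic matrices `L^{(u)}`
(`u = 1,…,U-1`), then for every value-iteration step `k ≥ 1`, belief `π`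
and `u < U`, `Q_k(π,u+1) - Q_k(π,u) ≥ (r_{u+1} - r_u)'π`; hence the largest
maximizer of `Q_k(π,·)` is at least the largest maximizer of `u ↦ r_u'π`. -/
theorem stmt_18 (X U : ℕ) [NeZero U]
    (P : Fin X → Fin X → ℝ) (hPnn : ∀ i j, 0 ≤ P i j) (hProw : ∀ i, ∑ j, P i j = 1)
    (Y : Fin U → ℕ)
    (B : (u : Fin U) → Fin X → Fin (Y u) → ℝ)
    (hBnn : ∀ u x y, 0 ≤ B u x y) (hBrow : ∀ u x, ∑ y, B u x y = 1)
    (r : Fin U → Fin X → ℝ) (ρ : ℝ) (hρ0 : 0 ≤ ρ) (hρ1 : ρ < 1)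
    -- Blackwell dominance: B(u) = B(u+1) × L⁽ᵘ⁾ for stochastic matrices L⁽ᵘ⁾
    (L : (u : Fin U) → (h : (u : ℕ) + 1 < U) →
      Fin (Y ⟨(u : ℕ) + 1, h⟩) → Fin (Y u) → ℝ)
    (hLnn : ∀ u h ybar y, 0 ≤ L u h ybar y)
    (hLrow : ∀ u h ybar, ∑ y, L u h ybar y = 1)
    (hBW : ∀ (u : Fin U) (h : (u : ℕ) + 1 < U) (i : Fin X) (y : Fin (Y u)),
      B u i y = ∑ ybar, B ⟨(u : ℕ) + 1, h⟩ i ybar * L u h ybar y)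
    -- normalizers positive on the belief simplex
    (hσ : ∀ (u : Fin U) (π : Fin X → ℝ), π ∈ stdSimplex ℝ (Fin X) →
      ∀ y : Fin (Y u), 0 < sigF P (B u) π y) :
    ∀ (k : ℕ), 1 ≤ k → ∀ π : Fin X → ℝ, π ∈ stdSimplex ℝ (Fin X) →
      (∀ (u : Fin U) (h : (u : ℕ) + 1 < U),
        (∑ i, (r ⟨(u : ℕ) + 1, h⟩ i - r u i) * π i) ≤
          Qit P Y B r ρ k ⟨(u : ℕ) + 1, h⟩ π - Qit P Y B r ρ k u π) ∧
      (∀ muLow muOpt : Fin U,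
        IsGreatest {u : Fin U | ∀ v, ∑ i, r v i * π i ≤ ∑ i, r u i * π i} muLow →
        IsGreatest {u : Fin U | ∀ v, Qit P Y B r ρ k v π ≤ Qit P Y B r ρ k u π} muOpt →
        muLow ≤ muOpt) :=
  stmt_18_general X U P hPnn Y B hBnn r ρ hρ0 L hLnn hLrow hBW hσ
end
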